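/- Let D be a finite directed graph and let c ∈ H¹(D, ℤ) be a cohomology class such that c(ℓ) ≥ 0 for every directed cycle ℓ in D. Then c can be represented by an integer 1-cochain that takes a non-negative value on each directed edge. -/

import Mathlib

/-!
Take as potential `f v` the least weight of a walk starting at `v` (the empty walk included).
Prepending an edge `e` to a walk from `tgt e` gives a walk from `src e`, so
`f (src e) ≤ α e + f (tgt e)`, which is the required inequality. The infimum exists because no
closed walk has negative weight: cutting the closed subwalks out of any walk leaves a walk of
no larger weight that never departs twice from the same vertex, hence uses each edge at most
once and weighs at least `∑ e, min (α e) 0`.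
-/

namespace Multidigraph

variable {V E G : Type*} (src tgt : E → V)

inductive IsWalk : V → V → List E → Prop
  | nil (v : V) : IsWalk v v []
  | cons {e : E} {w : V} {l : List E} : IsWalk (tgt e) w l → IsWalk (src e) w (e :: l)

variable {src tgt}

namespace IsWalk

theorem exists_eq_append_of_mem {u v w : V} {l : List E} (h : IsWalk src tgt u w l)
    (hv : v ∈ l.map src) :
    ∃ l₁ l₂, l = l₁ ++ l₂ ∧ IsWalk src tgt u v l₁ ∧ IsWalk src tgt v w l₂ := by
  induction h with
  | nil => simp at hv
  | @cons e w l hl ih =>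
    by_cases he : src e = v
    · subst he
      exact ⟨[], e :: l, rfl, .nil _, .cons hl⟩
    · obtain ⟨l₁, l₂, rfl, h₁, h₂⟩ := ih (by simpa [Ne.symm he] using hv)
      exact ⟨e :: l₁, l₂, rfl, .cons h₁, h₂⟩

theorem eq_of_nil {u w : V} (h : IsWalk src tgt u w []) : u = w := by
  cases h
  rfl

theorem src_head {u w : V} {e : E} {l : List E} (h : IsWalk src tgt u w (e :: l)) :
    src e = u := by
  cases h
  rfl

theorem tgt_getElem {u w : V} {l : List E} (h : IsWalk src tgt u w l) (i : ℕ)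
    (hi : i < l.length) :
    tgt l[i] = if hi' : i + 1 < l.length then src l[i + 1] else w := by
  induction h generalizing i with
  | nil => simp at hi
  | @cons e w l hl ih =>
    rcases i with _ | i
    · rcases l with _ | ⟨f, l⟩
      · simpa using hl.eq_of_nil
      · simpa using hl.src_head.symm
    · simpa using ih i (by simpa using hi)

end IsWalk

theorem sum_nonneg_of_isWalk_self [AddCommMonoid G] [Preorder G] {α : E → G}
    (hcyc : ∀ (n : ℕ) (e : Fin (n + 1) → E),
        (∀ i : Fin (n + 1), tgt (e i) = src (e (i + 1))) → 0 ≤ ∑ i, α (e i))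
    {v : V} {c : List E} (h : IsWalk src tgt v v c) : 0 ≤ (c.map α).sum := by
  rcases c with _ | ⟨e, t⟩
  · simp
  rw [← Fin.sum_univ_fun_getElem]
  refine hcyc t.length (fun i => (e :: t)[i.1]) fun i => ?_
  by_cases hlast : i = Fin.last t.length
  · subst hlast
    simpa [h.tgt_getElem] using h.src_head.symm
  · have hlt : i.1 + 1 < t.length + 1 := Nat.succ_lt_succ (Fin.lt_last_iff_ne_last.2 hlast)
    simp only [Fin.val_add_one_of_lt' hlt]
    exact (h.tgt_getElem _ _).trans (dif_pos hlt)

theorem IsWalk.exists_nodup_sum_le [AddCommMonoid G] [PartialOrder G] [IsOrderedAddMonoid G]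
    {α : E → G} (hclosed : ∀ v c, IsWalk src tgt v v c → 0 ≤ (c.map α).sum)
    {u w : V} {l : List E} (h : IsWalk src tgt u w l) :
    ∃ l', IsWalk src tgt u w l' ∧ (l'.map src).Nodup ∧ (l'.map α).sum ≤ (l.map α).sum := by
  induction h with
  | nil v => exact ⟨[], .nil v, List.nodup_nil, le_rfl⟩
  | @cons e w t _ ih =>
    obtain ⟨t', ht', hnodup, hle⟩ := ih
    by_cases hmem : src e ∈ t'.map src
    · -- `e` followed by the part of `t'` before its return to `src e` is a closed walk
      obtain ⟨t₁, t₂, rfl, h₁, h₂⟩ := ht'.exists_eq_append_of_mem hmem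
      refine ⟨t₂, h₂, (List.map_append ▸ hnodup).of_append_right, ?_⟩
      calc (t₂.map α).sum ≤ ((e :: t₁).map α).sum + (t₂.map α).sum :=
            le_add_of_nonneg_left (hclosed _ _ (.cons h₁))
        _ = α e + ((t₁ ++ t₂).map α).sum := by simp [add_assoc]
        _ ≤ α e + (t.map α).sum := by gcongr
        _ = ((e :: t).map α).sum := by simp
    · exact ⟨e :: t', .cons ht', List.nodup_cons.2 ⟨hmem, hnodup⟩, by
        simpa using add_le_add_right hle (α e)⟩

theorem sum_min_zero_le_sum_map_of_nodup [Fintype E] [AddCommMonoid G] [LinearOrder G]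
    [IsOrderedAddMonoid G] (α : E → G) {l : List E} (hl : l.Nodup) :
    ∑ e, min (α e) 0 ≤ (l.map α).sum := by
  classical
  calc ∑ e, min (α e) 0 ≤ ∑ e ∈ l.toFinset, min (α e) 0 :=
        Finset.sum_le_sum_of_subset_of_nonpos' (Finset.subset_univ _)
          fun e _ _ => min_le_right _ _
    _ ≤ ∑ e ∈ l.toFinset, α e := Finset.sum_le_sum fun e _ => min_le_left _ _
    _ = (l.map α).sum := List.sum_toFinset α hl

theorem IsWalk.sum_min_zero_le_sum [Fintype E] [AddCommMonoid G] [LinearOrder G]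
    [IsOrderedAddMonoid G] {α : E → G}
    (hclosed : ∀ v c, IsWalk src tgt v v c → 0 ≤ (c.map α).sum)
    {u w : V} {l : List E} (h : IsWalk src tgt u w l) :
    ∑ e, min (α e) 0 ≤ (l.map α).sum := by
  obtain ⟨l', -, hnodup, hle⟩ := h.exists_nodup_sum_le hclosed
  exact (sum_min_zero_le_sum_map_of_nodup α (List.Nodup.of_map src hnodup)).trans hle

section Potential

variable [ConditionallyCompleteLinearOrder G] [AddCommGroup G] [IsOrderedAddMonoid G]

variable (src tgt) in
noncomputable def minWalkWeight (α : E → G) (v : V) : G :=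
  sInf {x | ∃ w l, IsWalk src tgt v w l ∧ (l.map α).sum = x}

theorem minWalkWeight_src_le [Fintype E] {α : E → G}
    (hclosed : ∀ v c, IsWalk src tgt v v c → 0 ≤ (c.map α).sum) (e : E) :
    minWalkWeight src tgt α (src e) ≤ α e + minWalkWeight src tgt α (tgt e) := by
  rw [← sub_le_iff_le_add']
  refine le_csInf ⟨0, tgt e, [], .nil _, by simp⟩ ?_
  rintro _ ⟨w, l, hl, rfl⟩
  rw [sub_le_iff_le_add']
  refine csInf_le ⟨∑ f, min (α f) 0, ?_⟩ ⟨w, e :: l, .cons hl, by simp⟩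
  rintro _ ⟨w', l', hl', rfl⟩
  exact hl'.sum_min_zero_le_sum hclosed

end Potential

end Multidigraph

open Multidigraph in
theorem stmt19 {V E : Type*} [Fintype E]
    (src tgt : E → V) (α : E → ℤ)
    (hcyc : ∀ (n : ℕ) (e : Fin (n + 1) → E),
        (∀ i : Fin (n + 1), tgt (e i) = src (e (i + 1))) →
        0 ≤ ∑ i, α (e i)) :
    ∃ f : V → ℤ, ∀ ed : E, 0 ≤ α ed + (f (tgt ed) - f (src ed)) := by
  refine ⟨minWalkWeight src tgt α, fun ed => ?_⟩
  have hpot := minWalkWeight_src_le (fun _ _ hc => sum_nonneg_of_isWalk_self hcyc hc) ed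
  omega
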